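/- The three pseudoaltitudes of a hyperbolic triangle are concurrent: they meet at the radical center of the circles through (A,B,H_a,H_b), (A,C,H_a,H_c) and (B,C,H_b,H_c). -/

import Mathlib

/-- The inverse hyperbolic cosine. -/
noncomputable def arcosh (x : ℝ) : ℝ := Real.log (x + Real.sqrt (x ^ 2 - 1))

/-- Hyperbolic distance between two points of the Poincaré disk (viewed inside `ℂ`). -/
noncomputable def dH (a b : ℂ) : ℝ :=
  arcosh (1 + 2 * ‖a - b‖ ^ 2 /
    ((1 - ‖a‖ ^ 2) * (1 - ‖b‖ ^ 2)))

/-- Membership in the open unit (Poincaré) disk. -/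
def inDisk (a : ℂ) : Prop := ‖a‖ < 1

/-- The (unsigned) hyperbolic angle at `y` of the triangle `x y z`,
defined via the hyperbolic law of cosines. -/
noncomputable def hAngle (x y z : ℂ) : ℝ :=
  Real.arccos ((Real.cosh (dH y x) * Real.cosh (dH y z) - Real.cosh (dH x z)) /
    (Real.sinh (dH y x) * Real.sinh (dH y z)))

/-- The hyperbolic area (angular defect) of triangle `a b c`. -/
noncomputable def hArea (a b c : ℂ) : ℝ :=
  Real.pi - hAngle b a c - hAngle a b c - hAngle a c b

/-- `hSigma x y z = ∠xyz − ∠zxy − ∠yzx`: the angle of triangle `x y z` at `y`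
minus its angles at `x` and at `z`. -/
noncomputable def hSigma (x y z : ℂ) : ℝ :=
  hAngle x y z - hAngle z x y - hAngle y z x

/-- `x` lies on the hyperbolic segment from `a` to `b`. -/
def onSeg (a x b : ℂ) : Prop := dH a x + dH x b = dH a b

/-- `x` lies strictly between `a` and `b`. -/
def sbtwH (a x b : ℂ) : Prop := onSeg a x b ∧ x ≠ a ∧ x ≠ b

/-- `x` lies on the hyperbolic line (geodesic) through `a` and `b`. -/
def onLine (a b x : ℂ) : Prop := onSeg a x b ∨ onSeg a b x ∨ onSeg x a b

/-- Four points lie on a common hyperbolic circle. -/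
def hConcyclic (a b c d : ℂ) : Prop :=
  ∃ o : ℂ, ∃ r : ℝ, inDisk o ∧ 0 < r ∧ dH o a = r ∧ dH o b = r ∧ dH o c = r ∧ dH o d = r

/-- `p` and `q` lie strictly on the same side of the line through `a`, `b`. -/
def hSameSide (a b p q : ℂ) : Prop :=
  ¬ onLine a b p ∧ ¬ onLine a b q ∧ ∀ x, onSeg p x q → ¬ onLine a b x

/-- `p` and `q` lie strictly on opposite sides of the line through `a`, `b`. -/
def hOppSide (a b p q : ℂ) : Prop :=
  ¬ onLine a b p ∧ ¬ onLine a b q ∧ ∃ x, onSeg p x q ∧ onLine a b x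

/-- The pseudolength of the segment `a b`: the Euclidean length of its image
after an isometry taking `a` to the center of the Poincaré disk. -/
noncomputable def dE (a b : ℂ) : ℝ := Real.tanh (dH a b / 2)

/-- The (signed) power of the point `a` with respect to the hyperbolic circle of
center `o` and radius `r`, in the pseudolength sense. -/
noncomputable def hPow (a o : ℂ) (r : ℝ) : ℝ :=
  Real.tanh ((dH a o - r) / 2) * Real.tanh ((dH a o + r) / 2)

/-- The hyperbolic circle of center `o`, radius `r` is tangent at `p` to the line `a b`. -/
def hTangentAt (o : ℂ) (r : ℝ) (a b p : ℂ) : Prop :=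
  onLine a b p ∧ dH o p = r ∧ ∀ q, onLine a b q → r ≤ dH o q

/-- Two hyperbolic circles are tangent: they meet in exactly one point. -/
def hTangentCircles (o : ℂ) (r : ℝ) (o' : ℂ) (r' : ℝ) : Prop :=
  ∃! p : ℂ, dH o p = r ∧ dH o' p = r'

/-!
In the hyperboloid model, `cosh (dH x y) = -⟪x, y⟫` for the Lorentz form. The circle of center
`o` and radius `r` is the section of the hyperboloid by the affine plane `⟪x, o / cosh r⟫ = -1`,
and the pseudolength power of `x` with respect to it is `(m + 1) / (m - 1)` with
`m = ⟪x, o / cosh r⟫`. So two circles through `a ≠ b` give `x` equal powers exactly when `x` lies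
in the plane spanned by `a` and `b`: their radical axis is the line `ab`. The cevians `A Ha` and
`B Hb` cross inside the triangle at a point `P` (a positive combination of lifted vertices); as `P`
lies on the radical axes of the first circle with each of the other two, it has equal powers with
respect to all three circles and hence lies on the radical axis `C Hc` of the last two.
-/

namespace PoincareDisk

-- Below `1` the defining formula of `arcosh` is junk (`Real.log` ignores signs), but nonpositive.
lemma arcosh_nonpos {x : ℝ} (hx : x ≤ 1) : arcosh x ≤ 0 := by
  rw [arcosh, ← Real.log_abs]
  refine Real.log_nonpos (abs_nonneg _) (abs_le.mpr ?_)
  rcases le_or_gt (x ^ 2) 1 with hx2 | hx2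
  · rw [Real.sqrt_eq_zero_of_nonpos (by linarith)]
    constructor <;> nlinarith
  · have hs := Real.sq_sqrt (show 0 ≤ x ^ 2 - 1 by linarith)
    constructor <;> nlinarith [Real.sqrt_nonneg (x ^ 2 - 1)]

variable {a b z : ℂ} {s t : ℝ}

lemma one_sub_sq_norm_pos (ha : inDisk a) : 0 < 1 - ‖a‖ ^ 2 := by
  have : ‖a‖ < 1 := ha
  nlinarith [norm_nonneg a]

lemma one_le_dH_arg (ha : inDisk a) (hb : inDisk b) :
    1 ≤ 1 + 2 * ‖a - b‖ ^ 2 / ((1 - ‖a‖ ^ 2) * (1 - ‖b‖ ^ 2)) := by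
  have := mul_pos (one_sub_sq_norm_pos ha) (one_sub_sq_norm_pos hb)
  have : 0 ≤ 2 * ‖a - b‖ ^ 2 / ((1 - ‖a‖ ^ 2) * (1 - ‖b‖ ^ 2)) := by positivity
  linarith

lemma cosh_dH (ha : inDisk a) (hb : inDisk b) :
    Real.cosh (dH a b) = 1 + 2 * ‖a - b‖ ^ 2 / ((1 - ‖a‖ ^ 2) * (1 - ‖b‖ ^ 2)) :=
  Real.cosh_arcosh (one_le_dH_arg ha hb)

lemma dH_nonneg (ha : inDisk a) (hb : inDisk b) : 0 ≤ dH a b :=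
  Real.arcosh_nonneg (one_le_dH_arg ha hb)

lemma dH_pos (ha : inDisk a) (hb : inDisk b) (hab : a ≠ b) : 0 < dH a b := by
  refine Real.arcosh_pos ?_
  have := mul_pos (one_sub_sq_norm_pos ha) (one_sub_sq_norm_pos hb)
  have : 0 < ‖a - b‖ := norm_pos_iff.mpr (sub_ne_zero.mpr hab)
  have : 0 < 2 * ‖a - b‖ ^ 2 / ((1 - ‖a‖ ^ 2) * (1 - ‖b‖ ^ 2)) := by positivity
  linarith

lemma dH_comm (a b : ℂ) : dH a b = dH b a := by
  rw [dH, dH, norm_sub_rev, mul_comm (1 - ‖a‖ ^ 2)]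

@[simp]
lemma dH_self (a : ℂ) : dH a a = 0 := by
  simp [dH, arcosh]

lemma inDisk_of_dH_pos (ha : inDisk a) (h : 0 < dH a b) : inDisk b := by
  by_contra hb
  have hb1 : 1 ≤ ‖b‖ := not_lt.mp hb
  have : 2 * ‖a - b‖ ^ 2 / ((1 - ‖a‖ ^ 2) * (1 - ‖b‖ ^ 2)) ≤ 0 :=
    div_nonpos_of_nonneg_of_nonpos (by positivity)
      (mul_nonpos_of_nonneg_of_nonpos (one_sub_sq_norm_pos ha).le (by nlinarith))
  exact h.not_ge (arcosh_nonpos (by linarith))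

def minkowski : LinearMap.BilinForm ℝ (Fin 3 → ℝ) :=
  LinearMap.mk₂ ℝ (fun v w => v 1 * w 1 + v 2 * w 2 - v 0 * w 0)
    (fun _ _ _ => by simp only [Pi.add_apply]; ring)
    (fun _ _ _ => by simp only [Pi.smul_apply, smul_eq_mul]; ring)
    (fun _ _ _ => by simp only [Pi.add_apply]; ring)
    (fun _ _ _ => by simp only [Pi.smul_apply, smul_eq_mul]; ring)

lemma minkowski_apply (v w : Fin 3 → ℝ) : minkowski v w = v 1 * w 1 + v 2 * w 2 - v 0 * w 0 :=
  rfl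

/-- The isometry from the Poincaré disk onto the upper sheet of `⟪x, x⟫ = -1`. -/
noncomputable def toHyperboloid (a : ℂ) : Fin 3 → ℝ :=
  (1 - ‖a‖ ^ 2)⁻¹ • ![1 + ‖a‖ ^ 2, 2 * a.re, 2 * a.im]

lemma toHyperboloid_zero_pos (ha : inDisk a) : 0 < toHyperboloid a 0 := by
  have := one_sub_sq_norm_pos ha
  simp only [toHyperboloid, Pi.smul_apply, Matrix.cons_val_zero, smul_eq_mul]
  positivity

lemma minkowski_toHyperboloid (ha : inDisk a) (hb : inDisk b) :
    minkowski (toHyperboloid a) (toHyperboloid b) = -Real.cosh (dH a b) := by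
  have hna := (one_sub_sq_norm_pos ha).ne'
  have hnb := (one_sub_sq_norm_pos hb).ne'
  rw [cosh_dH ha hb, minkowski_apply]
  simp only [toHyperboloid, Pi.smul_apply, smul_eq_mul, Matrix.cons_val_zero, Matrix.cons_val_one,
    Matrix.cons_val_two, Matrix.head_cons, Matrix.tail_cons]
  field_simp
  rw [Complex.sq_norm, Complex.sq_norm, Complex.sq_norm, Complex.normSq_apply,
    Complex.normSq_apply, Complex.normSq_apply, Complex.sub_re, Complex.sub_im]
  ring

lemma minkowski_toHyperboloid_self (ha : inDisk a) :
    minkowski (toHyperboloid a) (toHyperboloid a) = -1 := by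
  simp [minkowski_toHyperboloid ha ha]

lemma onSeg_comm {x : ℂ} : onSeg a x b ↔ onSeg b x a := by
  rw [onSeg, onSeg, dH_comm a x, dH_comm x b, dH_comm a b, add_comm]

lemma onSeg_of_cosh_eq {x : ℂ} (ha : inDisk a) (hx : inDisk x) (hb : inDisk b)
    (h : Real.cosh (dH a x + dH x b) = Real.cosh (dH a b)) : onSeg a x b :=
  Real.cosh_injOn (Set.mem_Ici.mpr (add_nonneg (dH_nonneg ha hx) (dH_nonneg hx hb)))
    (Set.mem_Ici.mpr (dH_nonneg ha hb)) h

lemma cosh_dH_of_toHyperboloid_eq (ha : inDisk a) (hb : inDisk b) (hz : inDisk z)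
    (h : toHyperboloid z = s • toHyperboloid a + t • toHyperboloid b) :
    Real.cosh (dH b z) = s * Real.cosh (dH a b) + t := by
  have := minkowski_toHyperboloid hb hz
  rw [h, map_add, map_smul, map_smul, smul_eq_mul, smul_eq_mul, minkowski_toHyperboloid hb ha,
    minkowski_toHyperboloid_self hb, dH_comm b a] at this
  linarith

lemma sq_add_sq_of_toHyperboloid_eq (ha : inDisk a) (hb : inDisk b) (hz : inDisk z)
    (h : toHyperboloid z = s • toHyperboloid a + t • toHyperboloid b) :
    s ^ 2 + t ^ 2 + 2 * s * t * Real.cosh (dH a b) = 1 := by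
  have := minkowski_toHyperboloid_self hz
  simp only [h, map_add, map_smul, LinearMap.add_apply, LinearMap.smul_apply, smul_eq_mul,
    minkowski_toHyperboloid_self ha, minkowski_toHyperboloid_self hb,
    minkowski_toHyperboloid ha hb, minkowski_toHyperboloid hb ha, dH_comm b a] at this
  linarith

lemma sinh_dH_of_toHyperboloid_eq (ha : inDisk a) (hb : inDisk b) (hz : inDisk z)
    (h : toHyperboloid z = s • toHyperboloid a + t • toHyperboloid b) :
    Real.sinh (dH b z) = |s| * Real.sinh (dH a b) := by
  refine (pow_left_inj₀ (Real.sinh_nonneg_iff.mpr (dH_nonneg hb hz))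
    (mul_nonneg (abs_nonneg s) (Real.sinh_nonneg_iff.mpr (dH_nonneg ha hb))) two_ne_zero).mp ?_
  rw [mul_pow, sq_abs, Real.sinh_sq, Real.sinh_sq, cosh_dH_of_toHyperboloid_eq ha hb hz h]
  linear_combination sq_add_sq_of_toHyperboloid_eq ha hb hz h

lemma onSeg_of_toHyperboloid_eq_of_neg (ha : inDisk a) (hb : inDisk b) (hz : inDisk z)
    (h : toHyperboloid z = s • toHyperboloid a + t • toHyperboloid b) (hs : s < 0) :
    onSeg a b z := by
  have h' : toHyperboloid z = t • toHyperboloid b + s • toHyperboloid a := by rw [h, add_comm]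
  refine onSeg_of_cosh_eq ha hb hz ?_
  rw [Real.cosh_add, cosh_dH_of_toHyperboloid_eq ha hb hz h,
    cosh_dH_of_toHyperboloid_eq hb ha hz h', sinh_dH_of_toHyperboloid_eq ha hb hz h,
    abs_of_neg hs, dH_comm b a]
  linear_combination (-s) * Real.sinh_sq (dH a b)

lemma onSeg_of_toHyperboloid_eq_of_nonneg (ha : inDisk a) (hb : inDisk b) (hz : inDisk z)
    (h : toHyperboloid z = s • toHyperboloid a + t • toHyperboloid b) (hs : 0 ≤ s)
    (ht : 0 ≤ t) : onSeg a z b := by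
  have h' : toHyperboloid z = t • toHyperboloid b + s • toHyperboloid a := by rw [h, add_comm]
  refine onSeg_of_cosh_eq ha hz hb ?_
  rw [Real.cosh_add, dH_comm z b, cosh_dH_of_toHyperboloid_eq ha hb hz h,
    cosh_dH_of_toHyperboloid_eq hb ha hz h', sinh_dH_of_toHyperboloid_eq ha hb hz h,
    sinh_dH_of_toHyperboloid_eq hb ha hz h', abs_of_nonneg hs, abs_of_nonneg ht, dH_comm b a]
  linear_combination (s * t) * Real.sinh_sq (dH a b)
    + Real.cosh (dH a b) * sq_add_sq_of_toHyperboloid_eq ha hb hz h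

lemma onLine_of_toHyperboloid_eq (ha : inDisk a) (hb : inDisk b) (hz : inDisk z)
    (h : toHyperboloid z = s • toHyperboloid a + t • toHyperboloid b) :
    onLine a b z := by
  have h' : toHyperboloid z = t • toHyperboloid b + s • toHyperboloid a := by rw [h, add_comm]
  rcases lt_or_ge s 0 with hs | hs
  · exact Or.inr (Or.inl (onSeg_of_toHyperboloid_eq_of_neg ha hb hz h hs))
  rcases lt_or_ge t 0 with ht | ht
  · exact Or.inr (Or.inr (onSeg_comm.mp (onSeg_of_toHyperboloid_eq_of_neg hb ha hz h' ht)))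
  · exact Or.inl (onSeg_of_toHyperboloid_eq_of_nonneg ha hb hz h hs ht)

lemma det_sq_eq_neg_det_gram (f : Fin 3 → Fin 3 → ℝ) :
    (Matrix.of f).det ^ 2 = -(Matrix.of fun i j => minkowski (f i) (f j)).det := by
  simp only [Matrix.det_fin_three, Matrix.of_apply, minkowski_apply]
  ring

lemma det_toHyperboloid_eq_zero_of_onSeg (ha : inDisk a) (hz : inDisk z) (hb : inDisk b)
    (h : onSeg a z b) :
    (Matrix.of ![toHyperboloid a, toHyperboloid b, toHyperboloid z]).det = 0 := by
  have hcosh : Real.cosh (dH a b) = Real.cosh (dH a z) * Real.cosh (dH b z)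
      + Real.sinh (dH a z) * Real.sinh (dH b z) := by
    rw [← h, Real.cosh_add, dH_comm z b]
  refine pow_eq_zero_iff two_ne_zero |>.mp ?_
  rw [det_sq_eq_neg_det_gram]
  simp only [Matrix.det_fin_three, Matrix.of_apply, Matrix.cons_val_zero, Matrix.cons_val_one,
    Matrix.cons_val_two, Matrix.head_cons, Matrix.tail_cons, minkowski_toHyperboloid_self ha,
    minkowski_toHyperboloid_self hb, minkowski_toHyperboloid_self hz, minkowski_toHyperboloid ha hb,
    minkowski_toHyperboloid hb ha, minkowski_toHyperboloid ha hz, minkowski_toHyperboloid hz ha,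
    minkowski_toHyperboloid hb hz, minkowski_toHyperboloid hz hb, dH_comm b a, dH_comm z a,
    dH_comm z b]
  linear_combination -(Real.cosh (dH a b) - Real.cosh (dH a z) * Real.cosh (dH b z)
      + Real.sinh (dH a z) * Real.sinh (dH b z)) * hcosh
    - Real.sinh (dH b z) ^ 2 * Real.sinh_sq (dH a z)
    - (Real.cosh (dH a z) ^ 2 - 1) * Real.sinh_sq (dH b z)

lemma linearIndependent_toHyperboloid (ha : inDisk a) (hb : inDisk b) (hab : a ≠ b) :
    LinearIndependent ℝ ![toHyperboloid a, toHyperboloid b] := by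
  refine LinearIndependent.pair_iff.mpr fun s t hst => ?_
  have hc := Real.one_lt_cosh.mpr (dH_pos ha hb hab).ne'
  have hma := congrArg (minkowski (toHyperboloid a)) hst
  have hmb := congrArg (minkowski (toHyperboloid b)) hst
  simp only [map_add, map_smul, smul_eq_mul, map_zero, minkowski_toHyperboloid_self ha,
    minkowski_toHyperboloid_self hb, minkowski_toHyperboloid ha hb,
    minkowski_toHyperboloid hb ha, dH_comm b a] at hma hmb
  have ht : t = 0 := by
    have : t * (Real.cosh (dH a b) ^ 2 - 1) = 0 := by
      linear_combination hmb - Real.cosh (dH a b) * hma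
    exact (mul_eq_zero.mp this).resolve_right (by nlinarith)
  subst ht
  exact ⟨by linarith, rfl⟩

lemma exists_toHyperboloid_eq_of_det_eq_zero (ha : inDisk a) (hb : inDisk b) (hab : a ≠ b)
    (h : (Matrix.of ![toHyperboloid a, toHyperboloid b, toHyperboloid z]).det = 0) :
    ∃ s t : ℝ, toHyperboloid z = s • toHyperboloid a + t • toHyperboloid b := by
  obtain ⟨v, hv, hvM⟩ := Matrix.exists_vecMul_eq_zero_iff.mpr h
  have hrel : v 0 • toHyperboloid a + v 1 • toHyperboloid b + v 2 • toHyperboloid z = 0 := by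
    ext j
    simpa [Matrix.vecMul, dotProduct, Fin.sum_univ_three] using congrFun hvM j
  by_cases hv2 : v 2 = 0
  · rw [hv2, zero_smul, add_zero] at hrel
    obtain ⟨hv0, hv1⟩ :=
      LinearIndependent.pair_iff.mp (linearIndependent_toHyperboloid ha hb hab) _ _ hrel
    exact absurd (funext fun i => by fin_cases i <;> assumption) hv
  · refine ⟨-v 0 / v 2, -v 1 / v 2, ?_⟩
    ext j
    have := congrFun hrel j
    simp only [Pi.add_apply, Pi.smul_apply, smul_eq_mul, Pi.zero_apply] at this ⊢
    field_simp
    linarith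

lemma pos_of_toHyperboloid_eq_of_onSeg (ha : inDisk a) (hb : inDisk b)
    (hz : inDisk z) (h : toHyperboloid z = s • toHyperboloid a + t • toHyperboloid b)
    (hseg : onSeg a z b) (hzb : z ≠ b) : 0 < s := by
  have hbz := dH_pos hb hz hzb.symm
  rcases lt_trichotomy s 0 with hs | hs | hs
  · have hbzs : onSeg a b z := onSeg_of_toHyperboloid_eq_of_neg ha hb hz h hs
    rw [onSeg] at hseg hbzs
    linarith [dH_comm z b]
  · have := sinh_dH_of_toHyperboloid_eq ha hb hz h
    rw [hs, abs_zero, zero_mul, Real.sinh_eq_zero] at this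
    linarith
  · exact hs

lemma ne_of_sbtwH (ha : inDisk a) (hz : inDisk z) (h : sbtwH a z b) : a ≠ b := by
  rintro rfl
  have := h.1
  rw [onSeg, dH_self, dH_comm z a] at this
  linarith [dH_pos ha hz h.2.1.symm]

lemma exists_pos_toHyperboloid_eq_of_sbtwH (ha : inDisk a) (hb : inDisk b)
    (hz : inDisk z) (h : sbtwH a z b) :
    ∃ s t : ℝ, 0 < s ∧ 0 < t ∧ toHyperboloid z = s • toHyperboloid a + t • toHyperboloid b := by
  obtain ⟨s, t, hst⟩ := exists_toHyperboloid_eq_of_det_eq_zero ha hb (ne_of_sbtwH ha hz h)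
    (det_toHyperboloid_eq_zero_of_onSeg ha hz hb h.1)
  obtain ⟨hseg, hza, hzb⟩ := h
  have hts : toHyperboloid z = t • toHyperboloid b + s • toHyperboloid a := by rw [hst, add_comm]
  exact ⟨s, t, pos_of_toHyperboloid_eq_of_onSeg ha hb hz hst hseg hzb,
    pos_of_toHyperboloid_eq_of_onSeg hb ha hz hts (onSeg_comm.mp hseg) hza, hst⟩

lemma minkowski_eq_of_toHyperboloid_eq {c : Fin 3 → ℝ}
    (h : toHyperboloid z = s • toHyperboloid a + t • toHyperboloid b)
    (hac : minkowski (toHyperboloid a) c = -1) (hbc : minkowski (toHyperboloid b) c = -1) :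
    minkowski (toHyperboloid z) c = -(s + t) := by
  rw [h, map_add, map_smul, map_smul, LinearMap.add_apply, LinearMap.smul_apply,
    LinearMap.smul_apply, smul_eq_mul, smul_eq_mul, hac, hbc]
  ring

lemma minkowski_toHyperboloid_ne_of_sbtwH {c : Fin 3 → ℝ} (ha : inDisk a) (hb : inDisk b)
    (hz : inDisk z) (h : sbtwH a z b) (hac : minkowski (toHyperboloid a) c = -1)
    (hbc : minkowski (toHyperboloid b) c = -1) : minkowski (toHyperboloid z) c ≠ -1 := by
  obtain ⟨s, t, hs, ht, hst⟩ := exists_pos_toHyperboloid_eq_of_sbtwH ha hb hz h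
  have hnorm := sq_add_sq_of_toHyperboloid_eq ha hb hz hst
  have hcosh := Real.one_lt_cosh.mpr (dH_pos ha hb (ne_of_sbtwH ha hz h)).ne'
  rw [minkowski_eq_of_toHyperboloid_eq hst hac hbc]
  nlinarith [mul_pos hs ht]

lemma onLine_of_minkowski_eq_zero {w : Fin 3 → ℝ} (hw : w ≠ 0) (ha : inDisk a)
    (hb : inDisk b) (hz : inDisk z) (hab : a ≠ b) (haw : minkowski (toHyperboloid a) w = 0)
    (hbw : minkowski (toHyperboloid b) w = 0) (hzw : minkowski (toHyperboloid z) w = 0) :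
    onLine a b z := by
  have hdet : (Matrix.of ![toHyperboloid a, toHyperboloid b, toHyperboloid z]).det = 0 := by
    -- the `i`-th entry of `M *ᵥ ![-w 0, w 1, w 2]` is the Lorentz product of row `i` with `w`
    refine Matrix.exists_mulVec_eq_zero_iff.mp ⟨![-w 0, w 1, w 2], fun h0 => hw ?_, ?_⟩
    · have h₀ := congrFun h0 0
      have h₁ := congrFun h0 1
      have h₂ := congrFun h0 2
      simp only [Matrix.cons_val_zero, Matrix.cons_val_one, Matrix.cons_val_two, Matrix.head_cons,
        Matrix.tail_cons, Pi.zero_apply, neg_eq_zero] at h₀ h₁ h₂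
      funext i
      fin_cases i <;> assumption
    · rw [minkowski_apply] at haw hbw hzw
      funext i
      fin_cases i <;> simp [Matrix.mulVec, dotProduct, Fin.sum_univ_three] <;> linarith
  obtain ⟨s, t, hst⟩ := exists_toHyperboloid_eq_of_det_eq_zero ha hb hab hdet
  exact onLine_of_toHyperboloid_eq ha hb hz hst

lemma exists_toHyperboloid_eq_smul {v : Fin 3 → ℝ} (hv0 : 0 < v 0) (hv : minkowski v v < 0) :
    ∃ p : ℂ, inDisk p ∧ ∃ q : ℝ, toHyperboloid p = q • v := by
  rw [minkowski_apply] at hv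
  set ρ := Real.sqrt (v 0 ^ 2 - v 1 ^ 2 - v 2 ^ 2)
  have hρ : 0 < ρ := Real.sqrt_pos.mpr (by nlinarith)
  have hρsq : ρ ^ 2 = v 0 ^ 2 - v 1 ^ 2 - v 2 ^ 2 := Real.sq_sqrt (by nlinarith)
  have hd : 0 < v 0 + ρ := by positivity
  -- the stereographic projection of `ρ⁻¹ • v` from `(-1, 0, 0)`
  obtain ⟨p, hre, him⟩ : ∃ p : ℂ, p.re = v 1 / (v 0 + ρ) ∧ p.im = v 2 / (v 0 + ρ) :=
    ⟨⟨_, _⟩, rfl, rfl⟩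
  have hnorm : ‖p‖ ^ 2 = (v 0 - ρ) / (v 0 + ρ) := by
    rw [Complex.sq_norm, Complex.normSq_apply, hre, him]
    field_simp
    linear_combination hρsq
  have hsub : 1 - ‖p‖ ^ 2 = 2 * ρ / (v 0 + ρ) := by
    rw [hnorm]
    field_simp
    ring
  have hadd : 1 + ‖p‖ ^ 2 = 2 * v 0 / (v 0 + ρ) := by
    rw [hnorm]
    field_simp
    ring
  refine ⟨p, (sq_lt_one_iff₀ (norm_nonneg p)).mp ?_, ρ⁻¹, ?_⟩
  · rw [hnorm, div_lt_one hd]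
    linarith
  · funext i
    fin_cases i <;>
      simp only [toHyperboloid, hsub, hadd, hre, him, Pi.smul_apply, smul_eq_mul,
        Matrix.cons_val_zero, Matrix.cons_val_one, Matrix.cons_val_two, Matrix.head_cons,
        Matrix.tail_cons, Fin.zero_eta, Fin.mk_one, Fin.reduceFinMk] <;>
      field_simp

lemma exists_toHyperboloid_eq_smul_add_smul (ha : inDisk a) (hb : inDisk b)
    (hs : 0 < s) (ht : 0 < t) :
    ∃ p : ℂ, inDisk p ∧ ∃ q : ℝ,
      toHyperboloid p = (q * s) • toHyperboloid a + (q * t) • toHyperboloid b := by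
  have hv0 : 0 < (s • toHyperboloid a + t • toHyperboloid b) 0 := by
    have := toHyperboloid_zero_pos ha
    have := toHyperboloid_zero_pos hb
    simp only [Pi.add_apply, Pi.smul_apply, smul_eq_mul]
    positivity
  have hv : minkowski (s • toHyperboloid a + t • toHyperboloid b)
      (s • toHyperboloid a + t • toHyperboloid b) < 0 := by
    simp only [map_add, map_smul, LinearMap.add_apply, LinearMap.smul_apply, smul_eq_mul,
      minkowski_toHyperboloid_self ha, minkowski_toHyperboloid_self hb,
      minkowski_toHyperboloid ha hb, minkowski_toHyperboloid hb ha, dH_comm b a]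
    nlinarith [mul_pos (mul_pos hs ht) (Real.cosh_pos (dH a b)), mul_pos hs hs, mul_pos ht ht]
  obtain ⟨p, hp, q, hpq⟩ := exists_toHyperboloid_eq_smul hv0 hv
  exact ⟨p, hp, q, by rw [hpq, smul_add, smul_smul, smul_smul]⟩

noncomputable def circleVec (o : ℂ) (r : ℝ) : Fin 3 → ℝ :=
  (Real.cosh r)⁻¹ • toHyperboloid o

lemma minkowski_circleVec {x o : ℂ} (hx : inDisk x) (ho : inDisk o) (r : ℝ) :
    minkowski (toHyperboloid x) (circleVec o r) = -Real.cosh (dH x o) / Real.cosh r := by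
  rw [circleVec, map_smul, smul_eq_mul, minkowski_toHyperboloid hx ho]
  ring

lemma minkowski_circleVec_of_dH_eq {x o : ℂ} {r : ℝ} (hx : inDisk x) (ho : inDisk o)
    (h : dH o x = r) : minkowski (toHyperboloid x) (circleVec o r) = -1 := by
  rw [minkowski_circleVec hx ho, dH_comm, h, neg_div, div_self (Real.cosh_pos r).ne']

lemma minkowski_circleVec_of_toHyperboloid_eq {o : ℂ} {r : ℝ} (ha : inDisk a) (hb : inDisk b)
    (ho : inDisk o) (h : toHyperboloid z = s • toHyperboloid a + t • toHyperboloid b)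
    (hao : dH o a = r) (hbo : dH o b = r) :
    minkowski (toHyperboloid z) (circleVec o r) = -(s + t) :=
  minkowski_eq_of_toHyperboloid_eq h (minkowski_circleVec_of_dH_eq ha ho hao)
    (minkowski_circleVec_of_dH_eq hb ho hbo)

/-- The radical axis of two circles meeting at `a ≠ b` is the line `ab`. -/
lemma onLine_of_minkowski_circleVec_eq {o o' : ℂ} {r r' : ℝ} (ha : inDisk a) (hb : inDisk b)
    (hz : inDisk z) (ho : inDisk o) (ho' : inDisk o') (hab : a ≠ b)
    (hne : circleVec o r ≠ circleVec o' r') (hao : dH o a = r) (hbo : dH o b = r)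
    (hao' : dH o' a = r') (hbo' : dH o' b = r')
    (h : minkowski (toHyperboloid z) (circleVec o r)
      = minkowski (toHyperboloid z) (circleVec o' r')) :
    onLine a b z := by
  refine onLine_of_minkowski_eq_zero (sub_ne_zero.mpr hne) ha hb hz hab ?_ ?_ ?_ <;>
    rw [map_sub, sub_eq_zero]
  · rw [minkowski_circleVec_of_dH_eq ha ho hao, minkowski_circleVec_of_dH_eq ha ho' hao']
  · rw [minkowski_circleVec_of_dH_eq hb ho hbo, minkowski_circleVec_of_dH_eq hb ho' hbo']
  · exact h

lemma tanh_mul_tanh (u v : ℝ) :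
    Real.tanh u * Real.tanh v
      = (Real.cosh (u + v) - Real.cosh (u - v)) / (Real.cosh (u + v) + Real.cosh (u - v)) := by
  have := Real.cosh_pos u
  have := Real.cosh_pos v
  rw [Real.cosh_add, Real.cosh_sub, Real.tanh_eq_sinh_div_cosh, Real.tanh_eq_sinh_div_cosh]
  field_simp
  ring

lemma hPow_eq_minkowski_circleVec {x o : ℂ} (hx : inDisk x) (ho : inDisk o) (r : ℝ) :
    hPow x o r = (minkowski (toHyperboloid x) (circleVec o r) + 1)
      / (minkowski (toHyperboloid x) (circleVec o r) - 1) := by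
  have hr := Real.cosh_pos r
  have hsum : -Real.cosh (dH x o) - Real.cosh r ≠ 0 := by linarith [Real.cosh_pos (dH x o)]
  rw [hPow, tanh_mul_tanh, show (dH x o - r) / 2 + (dH x o + r) / 2 = dH x o by ring,
    show (dH x o - r) / 2 - (dH x o + r) / 2 = -r by ring, Real.cosh_neg,
    minkowski_circleVec hx ho]
  field_simp
  ring

end PoincareDisk

open PoincareDisk in
theorem pseudoaltitudes_concurrent_general (A B C Ha Hb Hc o₁ o₂ o₃ : ℂ) (r₁ r₂ r₃ : ℝ)
    (hA : inDisk A) (hB : inDisk B) (hC : inDisk C)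
    (htri : ¬ onLine B C A)
    (hHa : sbtwH B Ha C) (hHb : sbtwH C Hb A) (hHc : sbtwH A Hc B)
    (hr₁ : 0 < r₁) (hr₂ : 0 < r₂) (hr₃ : 0 < r₃)
    (hc₁ : dH o₁ A = r₁ ∧ dH o₁ B = r₁ ∧ dH o₁ Ha = r₁ ∧ dH o₁ Hb = r₁)
    (hc₂ : dH o₂ A = r₂ ∧ dH o₂ C = r₂ ∧ dH o₂ Ha = r₂ ∧ dH o₂ Hc = r₂)
    (hc₃ : dH o₃ B = r₃ ∧ dH o₃ C = r₃ ∧ dH o₃ Hb = r₃ ∧ dH o₃ Hc = r₃) :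
    ∃ P : ℂ, inDisk P ∧ onLine A Ha P ∧ onLine B Hb P ∧ onLine C Hc P ∧
      hPow P o₁ r₁ = hPow P o₂ r₂ ∧ hPow P o₂ r₂ = hPow P o₃ r₃ := by
  obtain ⟨h₁A, h₁B, h₁Ha, h₁Hb⟩ := hc₁
  obtain ⟨h₂A, h₂C, h₂Ha, h₂Hc⟩ := hc₂
  obtain ⟨h₃B, h₃C, h₃Hb, h₃Hc⟩ := hc₃
  have ho₁ : inDisk o₁ := inDisk_of_dH_pos hA (by rwa [dH_comm, h₁A])
  have ho₂ : inDisk o₂ := inDisk_of_dH_pos hA (by rwa [dH_comm, h₂A])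
  have ho₃ : inDisk o₃ := inDisk_of_dH_pos hB (by rwa [dH_comm, h₃B])
  have hHaD : inDisk Ha := inDisk_of_dH_pos ho₁ (h₁Ha ▸ hr₁)
  have hHbD : inDisk Hb := inDisk_of_dH_pos ho₁ (h₁Hb ▸ hr₁)
  have hHcD : inDisk Hc := inDisk_of_dH_pos ho₂ (h₂Hc ▸ hr₂)
  have hCHc : C ≠ Hc := fun h => htri (Or.inr (Or.inl (onSeg_comm.mp (h ▸ hHc.1))))
  obtain ⟨β, γ, hβ, hγ, hHaBC⟩ := exists_pos_toHyperboloid_eq_of_sbtwH hB hC hHaD hHa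
  obtain ⟨δ, ε, hδ, hε, hHbCA⟩ := exists_pos_toHyperboloid_eq_of_sbtwH hC hA hHbD hHb
  -- `γε A + δ Ha = δβ B + γ Hb` on the hyperboloid, so the cevians meet at its projection `P`
  obtain ⟨P, hP, q, hPA⟩ := exists_toHyperboloid_eq_smul_add_smul hA hHaD (mul_pos hγ hε) hδ
  have hPB : toHyperboloid P
      = (q * (δ * β)) • toHyperboloid B + (q * γ) • toHyperboloid Hb := by
    rw [hPA, hHaBC, hHbCA]
    module
  have h₁₂ := (minkowski_circleVec_of_toHyperboloid_eq hA hHaD ho₁ hPA h₁A h₁Ha).trans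
    (minkowski_circleVec_of_toHyperboloid_eq hA hHaD ho₂ hPA h₂A h₂Ha).symm
  have h₁₃ := (minkowski_circleVec_of_toHyperboloid_eq hB hHbD ho₁ hPB h₁B h₁Hb).trans
    (minkowski_circleVec_of_toHyperboloid_eq hB hHbD ho₃ hPB h₃B h₃Hb).symm
  have h₂₃ : circleVec o₂ r₂ ≠ circleVec o₃ r₃ := fun h =>
    minkowski_toHyperboloid_ne_of_sbtwH hB hC hHaD hHa
      (minkowski_circleVec_of_dH_eq hB ho₃ h₃B) (minkowski_circleVec_of_dH_eq hC ho₃ h₃C)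
      (h ▸ minkowski_circleVec_of_dH_eq hHaD ho₂ h₂Ha)
  refine ⟨P, hP, onLine_of_toHyperboloid_eq hA hHaD hP hPA,
    onLine_of_toHyperboloid_eq hB hHbD hP hPB,
    onLine_of_minkowski_circleVec_eq hC hHcD hP ho₂ ho₃ hCHc h₂₃ h₂C h₂Hc h₃C h₃Hc
      (h₁₂.symm.trans h₁₃), ?_, ?_⟩
  · rw [hPow_eq_minkowski_circleVec hP ho₁, hPow_eq_minkowski_circleVec hP ho₂, h₁₂]
  · rw [hPow_eq_minkowski_circleVec hP ho₂, hPow_eq_minkowski_circleVec hP ho₃, ← h₁₂, h₁₃]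

/-- The three pseudoaltitudes of a hyperbolic triangle are concurrent, meeting
at the radical center of the circles through `A,B,Ha,Hb`, through `A,C,Ha,Hc`
and through `B,C,Hb,Hc`. -/
theorem pseudoaltitudes_concurrent (A B C Ha Hb Hc o₁ o₂ o₃ : ℂ) (r₁ r₂ r₃ : ℝ)
    (hA : inDisk A) (hB : inDisk B) (hC : inDisk C)
    (htri : ¬ onLine B C A)
    (hHa : sbtwH B Ha C) (hHb : sbtwH C Hb A) (hHc : sbtwH A Hc B)
    (haltA : hSigma B Ha A = hSigma A Ha C)
    (haltB : hSigma C Hb B = hSigma B Hb A)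
    (haltC : hSigma A Hc C = hSigma C Hc B)
    (hr₁ : 0 < r₁) (hr₂ : 0 < r₂) (hr₃ : 0 < r₃)
    (hc₁ : dH o₁ A = r₁ ∧ dH o₁ B = r₁ ∧ dH o₁ Ha = r₁ ∧ dH o₁ Hb = r₁)
    (hc₂ : dH o₂ A = r₂ ∧ dH o₂ C = r₂ ∧ dH o₂ Ha = r₂ ∧ dH o₂ Hc = r₂)
    (hc₃ : dH o₃ B = r₃ ∧ dH o₃ C = r₃ ∧ dH o₃ Hb = r₃ ∧ dH o₃ Hc = r₃) :
    ∃ P : ℂ, inDisk P ∧ onLine A Ha P ∧ onLine B Hb P ∧ onLine C Hc P ∧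
      hPow P o₁ r₁ = hPow P o₂ r₂ ∧ hPow P o₂ r₂ = hPow P o₃ r₃ :=
  pseudoaltitudes_concurrent_general A B C Ha Hb Hc o₁ o₂ o₃ r₁ r₂ r₃ hA hB hC htri hHa hHb hHc hr₁
    hr₂ hr₃ hc₁ hc₂ hc₃
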